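/- For every integer n ≥ 2 there exists a local singular ACM M with catenary degree exactly n; specifically, for a prime p the monoid M = M_{p^{n−1}, (p^{n−1}−1)p} has α = 1, β = n − 1, and c(M) = n. -/

import Mathlib

/-!
Write `d = n - 1`. The elements `≠ 1` of `M = M_{p^d, (p^d-1)p}` are the positive multiples `x`
of `p` with `x ≡ 1 (mod p^d - 1)`. Hence `p^d` is an atom, and any nonunit with `v_p(x) > d` is
`p^d` times a nonunit, so every atom has `p`-adic valuation in `[1, d]` and a factorization of
`x` has length at most `v_p(x)`.

Upper bound, by induction on `x`: if `v_p(x) ≤ d + 1`, any two factorizations are within distance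
`d + 1`. Otherwise, at most `d + 1` atoms of a factorization already have joint valuation in
`(d, 2d]`; their product is `p^d ρ` with `v_p(ρ) ≤ d`, so exchanging them for `p^d` and a
factorization of `ρ` is a step of length `≤ d + 1` to a factorization containing `p^d`, and
cancelling `p^d` leaves a smaller element.

Lower bound: by Dirichlet there is a prime `q ≡ p^(d-1) (mod p^d - 1)`. Then `p^i q^j ∈ M` iff
`i > 0` and `d ∣ i - j`, so the only atoms dividing `p^(d+1) q^(d+1)` are `p^d`, `pq` and
`pq^(d+1)`. This element therefore has exactly the two factorizations `(pq)^(d+1)` and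
`p^d · pq^(d+1)`, at distance `d + 1`.
-/

/-- Membership in the arithmetical congruence monoid `M_{a,b} = (a + b ℕ₀) ∪ {1}`. -/
def acmMem (a b x : ℕ) : Prop := x = 1 ∨ ∃ k : ℕ, x = a + k * b

/-- `x` is an atom (irreducible) of `M_{a,b}`. -/
def acmAtom (a b x : ℕ) : Prop :=
  acmMem a b x ∧ x ≠ 1 ∧
    ∀ y z : ℕ, acmMem a b y → acmMem a b z → x = y * z → y = 1 ∨ z = 1

/-- `s` is a factorization of `x` into atoms of `M_{a,b}`. -/
def acmFactorization (a b x : ℕ) (s : Multiset ℕ) : Prop :=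
  (∀ u ∈ s, acmAtom a b u) ∧ s.prod = x

/-- The distance between two factorizations. -/
def facDist (s t : Multiset ℕ) : ℕ := max (Multiset.card (s - t)) (Multiset.card (t - s))

/-- There is an `N`-chain of factorizations of `x` from `z₁` to `z₂` in `M_{a,b}`. -/
def acmNChain (a b x N : ℕ) (z₁ z₂ : Multiset ℕ) : Prop :=
  ∃ L : List (Multiset ℕ), L ≠ [] ∧ L.head? = some z₁ ∧ L.getLast? = some z₂ ∧
    (∀ z ∈ L, acmFactorization a b x z) ∧ L.Chain' (fun s t => facDist s t ≤ N)

/-- The set of `N` such that any two factorizations of any element of `M_{a,b}`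
are connected by an `N`-chain; `c(M) = n` iff `n` is the least element of this set. -/
def acmCatSet (a b : ℕ) : Set ℕ :=
  {N | ∀ x, acmMem a b x → ∀ z₁ z₂, acmFactorization a b x z₁ →
      acmFactorization a b x z₂ → acmNChain a b x N z₁ z₂}

/-- Divisibility inside the monoid `M_{a,b}`. -/
def acmDvd (a b x y : ℕ) : Prop := ∃ k, acmMem a b k ∧ x * k = y

/-- `s` is a bullet of `x` in `M_{a,b}`. -/
def acmBullet (a b x : ℕ) (s : Multiset ℕ) : Prop :=
  (∀ u ∈ s, acmAtom a b u) ∧ acmDvd a b x s.prod ∧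
    ∀ t : Multiset ℕ, t ≤ s → t ≠ s → ¬ acmDvd a b x t.prod

/-- Omega primality of `x` in `M_{a,b}`: the sup of the lengths of bullets of `x`. -/
noncomputable def acmOmega (a b x : ℕ) : ℕ∞ :=
  sSup {n : ℕ∞ | ∃ s : Multiset ℕ, acmBullet a b x s ∧ (Multiset.card s : ℕ∞) = n}

/-- The set of factorization lengths of `x` in `M_{a,b}`. -/
def acmLengthSet (a b x : ℕ) : Set ℕ :=
  {n | ∃ s : Multiset ℕ, acmFactorization a b x s ∧ Multiset.card s = n}

/-- `x` has at least two distinct factorization lengths. -/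
def acmLI (a b x : ℕ) : Prop := ∃ m ∈ acmLengthSet a b x, ∃ n ∈ acmLengthSet a b x, m ≠ n

/-- The length density of an element `x` of `M_{a,b}`. -/
noncomputable def acmLD (a b x : ℕ) : ℝ :=
  (((acmLengthSet a b x).ncard : ℝ) - 1) /
    (((sSup (acmLengthSet a b x) : ℕ) : ℝ) - ((sInf (acmLengthSet a b x) : ℕ) : ℝ))

section Chains

variable {a b x N : ℕ}

lemma facDist_comm (s t : Multiset ℕ) : facDist s t = facDist t s := max_comm _ _

@[simp]
lemma facDist_self (s : Multiset ℕ) : facDist s s = 0 := by simp [facDist]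

lemma facDist_add_left (r s t : Multiset ℕ) : facDist (r + s) (r + t) = facDist s t := by
  simp only [facDist, add_tsub_add_eq_tsub_left]

lemma facDist_le_max_card (s t : Multiset ℕ) :
    facDist s t ≤ max (Multiset.card s) (Multiset.card t) :=
  max_le_max (Multiset.card_le_card tsub_le_self) (Multiset.card_le_card tsub_le_self)

lemma acmNChain.of_facDist_le {z₁ z₂ : Multiset ℕ} (h₁ : acmFactorization a b x z₁)
    (h₂ : acmFactorization a b x z₂) (h : facDist z₁ z₂ ≤ N) : acmNChain a b x N z₁ z₂ := by
  refine ⟨[z₁, z₂], by simp, rfl, rfl, ?_, List.isChain_pair.mpr h⟩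
  simp only [List.mem_cons, List.not_mem_nil, or_false]
  rintro z (rfl | rfl) <;> assumption

lemma acmNChain.trans {z₁ z₂ z₃ : Multiset ℕ} (h₁₂ : acmNChain a b x N z₁ z₂)
    (h₂₃ : acmNChain a b x N z₂ z₃) : acmNChain a b x N z₁ z₃ := by
  obtain ⟨L₁, hL₁, hh₁, hl₁, hf₁, hc₁⟩ := h₁₂
  obtain ⟨L₂, -, hh₂, hl₂, hf₂, hc₂⟩ := h₂₃
  refine ⟨L₁ ++ L₂, by simp [hL₁], by simp [List.head?_append, hh₁], ?_, ?_, ?_⟩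
  · rw [List.getLast?_append, hl₂]; rfl
  · simpa only [List.mem_append] using fun z hz => hz.elim (hf₁ z) (hf₂ z)
  · refine List.isChain_append.mpr ⟨hc₁, hc₂, ?_⟩
    rintro u hu v hv
    rw [hl₁, Option.mem_some_iff] at hu
    rw [hh₂, Option.mem_some_iff] at hv
    simp [← hu, ← hv]

lemma acmNChain.symm {z₁ z₂ : Multiset ℕ} (h : acmNChain a b x N z₁ z₂) :
    acmNChain a b x N z₂ z₁ := by
  obtain ⟨L, hL, hh, hl, hf, hc⟩ := h
  refine ⟨L.reverse, by simpa using hL, by rw [List.head?_reverse, hl],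
    by rw [List.getLast?_reverse, hh], fun z hz => hf z (List.mem_reverse.mp hz), ?_⟩
  exact List.isChain_reverse.mpr (hc.imp fun s t h => (facDist_comm t s).trans_le h)

lemma acmNChain.cons {u : ℕ} {z₁ z₂ : Multiset ℕ} (hu : acmAtom a b u)
    (h : acmNChain a b x N z₁ z₂) : acmNChain a b (u * x) N (u ::ₘ z₁) (u ::ₘ z₂) := by
  obtain ⟨L, hL, hh, hl, hf, hc⟩ := h
  refine ⟨L.map (u ::ₘ ·), by simpa using hL, by simp [hh], by simp [hl], ?_, ?_⟩
  · simp only [List.mem_map]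
    rintro _ ⟨w, hw, rfl⟩
    refine ⟨?_, by rw [Multiset.prod_cons, (hf w hw).2]⟩
    simpa only [Multiset.mem_cons, forall_eq_or_imp] using ⟨hu, (hf w hw).1⟩
  · refine (List.isChain_map _).mpr (hc.imp fun s t h => ?_)
    rwa [← Multiset.singleton_add, ← Multiset.singleton_add, facDist_add_left]

lemma facDist_le_of_acmNChain {z₁ z₂ : Multiset ℕ} (hne : z₁ ≠ z₂)
    (honly : ∀ z, acmFactorization a b x z → z = z₁ ∨ z = z₂)
    (h : acmNChain a b x N z₁ z₂) : facDist z₁ z₂ ≤ N := by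
  obtain ⟨L, -, hh, hl, hf, hc⟩ := h
  induction L generalizing z₁ with
  | nil => simp at hh
  | cons w L ih =>
    obtain rfl : w = z₁ := by simpa using hh
    cases L with
    | nil => exact absurd (by simpa using hl) hne
    | cons v L =>
      obtain ⟨hwv, hcL⟩ := List.isChain_cons_cons.mp hc
      rcases honly v (hf v (by simp)) with rfl | rfl
      · exact ih hne honly rfl (by simpa using hl)
          (fun z hz => hf z (List.mem_cons_of_mem _ hz)) hcL
      · exact hwv

end Chains

lemma Nat.factorization_multiset_prod_apply (p : ℕ) {s : Multiset ℕ} (hs : 0 ∉ s) :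
    s.prod.factorization p = (s.map (·.factorization p)).sum := by
  induction s using Multiset.induction_on with
  | empty => simp
  | cons u s ih =>
    rw [Multiset.mem_cons, not_or] at hs
    rw [Multiset.prod_cons, Nat.factorization_mul (Ne.symm hs.1) (Multiset.prod_ne_zero hs.2),
      Finsupp.add_apply, ih hs.2, Multiset.map_cons, Multiset.sum_cons]

lemma Multiset.eq_replicate_add_replicate_add_replicate {α : Type*} [DecidableEq α]
    {s : Multiset α} {a b c : α} (hab : a ≠ b) (hac : a ≠ c) (hbc : b ≠ c)
    (h : ∀ x ∈ s, x = a ∨ x = b ∨ x = c) :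
    s = replicate (s.count a) a + replicate (s.count b) b + replicate (s.count c) c := by
  ext x
  simp only [count_add, count_replicate]
  by_cases hx : x = a ∨ x = b ∨ x = c
  · rcases hx with rfl | rfl | rfl <;> simp [hab, hac, hbc, hab.symm, hac.symm, hbc.symm]
  · have hxs : x ∉ s := fun hxs => hx (h x hxs)
    simp only [not_or] at hx
    simp [count_eq_zero.mpr hxs, Ne.symm hx.1, Ne.symm hx.2.1, Ne.symm hx.2.2]

/-- Greedily taking elements until the sum exceeds `d` overshoots by at most `d`. -/
lemma exists_le_card_le_sum_map_mem_Ioc {ι : Type*} (d : ℕ) (g : ι → ℕ) (t : Multiset ι)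
    (hg : ∀ u ∈ t, 1 ≤ g u ∧ g u ≤ d) (ht : d < (t.map g).sum) :
    ∃ s ≤ t, Multiset.card s ≤ d + 1 ∧ (s.map g).sum ∈ Set.Ioc d (2 * d) := by
  induction t using Multiset.induction_on with
  | empty => simp at ht
  | cons u t ih =>
    have hgt : ∀ v ∈ t, 1 ≤ g v ∧ g v ≤ d := fun v hv => hg v (Multiset.mem_cons_of_mem hv)
    by_cases htd : d < (t.map g).sum
    · obtain ⟨s, hst, hs⟩ := ih hgt htd
      exact ⟨s, hst.trans (Multiset.le_cons_self t u), hs⟩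
    have hcard : Multiset.card t ≤ (t.map g).sum := by
      simpa using Multiset.card_nsmul_le_sum (s := t.map g) (a := 1)
        (by simpa using fun v hv => (hgt v hv).1)
    have hu := hg u (Multiset.mem_cons_self u t)
    simp only [Multiset.map_cons, Multiset.sum_cons] at ht
    refine ⟨u ::ₘ t, le_rfl, ?_, ?_⟩
    · rw [Multiset.card_cons]; omega
    · simp only [Multiset.map_cons, Multiset.sum_cons, Set.mem_Ioc]; omega

namespace ACM

variable {p d q : ℕ}

lemma pow_modEq_one (hp : 0 < p) : p ^ d ≡ 1 [MOD p ^ d - 1] :=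
  Nat.modEq_sub (Nat.one_le_pow _ _ hp)

lemma coprime_self_pow_sub_one (hp : 0 < p) (hd : d ≠ 0) : Nat.Coprime p (p ^ d - 1) :=
  ((Nat.coprime_self_sub_right (Nat.one_le_pow _ _ hp)).mpr
    (Nat.coprime_one_right _)).coprime_dvd_left (dvd_pow_self p hd)

lemma pow_modEq_one_iff_dvd (hp : 1 < p) {e : ℕ} : p ^ e ≡ 1 [MOD p ^ d - 1] ↔ d ∣ e := by
  rw [Nat.ModEq.comm, Nat.modEq_iff_dvd' (Nat.one_le_pow _ _ (by omega)),
    ← Nat.gcd_eq_left_iff_dvd, Nat.pow_sub_one_gcd_pow_sub_one, ← Nat.gcd_eq_left_iff_dvd]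
  refine ⟨fun h => ?_, fun h => by rw [h]⟩
  exact Nat.pow_right_injective hp (Nat.sub_one_cancel (by positivity) (by positivity) h)

lemma gcd_pow_sub_one_mul (hp : 0 < p) (hd : d ≠ 0) :
    Nat.gcd (p ^ d) ((p ^ d - 1) * p) = p := by
  rw [((Nat.coprime_self_sub_right (Nat.one_le_pow _ _ hp)).mpr
    (Nat.coprime_one_right _)).symm.gcd_mul_left_cancel_right, Nat.gcd_eq_right (dvd_pow_self p hd)]

/-- The elements `≠ 1` of `M_{p^d, (p^d-1)p}`, see `acmMem_iff`. -/
def IsNonunit (p d x : ℕ) : Prop := 0 < x ∧ p ∣ x ∧ x ≡ 1 [MOD p ^ d - 1]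

namespace IsNonunit

variable {x y : ℕ}

lemma ne_zero (hx : IsNonunit p d x) : x ≠ 0 := hx.1.ne'

lemma one_lt (hp : 1 < p) (hx : IsNonunit p d x) : 1 < x :=
  hp.trans_le (Nat.le_of_dvd hx.1 hx.2.1)

lemma pow_le (hp : 1 < p) (hx : IsNonunit p d x) : p ^ d ≤ x := by
  have hx1 := hx.one_lt hp
  have := Nat.le_of_dvd (by omega) ((Nat.modEq_iff_dvd' (by omega)).mp hx.2.2.symm)
  omega

lemma one_le_factorization (hp : p.Prime) (hx : IsNonunit p d x) : 1 ≤ x.factorization p :=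
  hp.factorization_pos_of_dvd hx.ne_zero hx.2.1

lemma mul (hx : IsNonunit p d x) (hy : IsNonunit p d y) : IsNonunit p d (x * y) :=
  ⟨Nat.mul_pos hx.1 hy.1, hx.2.1.mul_right y, by simpa using hx.2.2.mul hy.2.2⟩

lemma multiset_prod {s : Multiset ℕ} (hs : s ≠ 0) (h : ∀ u ∈ s, IsNonunit p d u) :
    IsNonunit p d s.prod := by
  induction s using Multiset.induction_on with
  | empty => exact absurd rfl hs
  | cons u s ih =>
    rw [Multiset.prod_cons]
    obtain rfl | hs := eq_or_ne s 0
    · simpa using h u (Multiset.mem_cons_self u 0)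
    · exact (h u (Multiset.mem_cons_self u s)).mul
        (ih hs fun v hv => h v (Multiset.mem_cons_of_mem hv))

lemma exists_eq_pow_mul (hp : p.Prime) (hy : IsNonunit p d y) (hv : d < y.factorization p) :
    ∃ ρ, IsNonunit p d ρ ∧ y = p ^ d * ρ := by
  obtain ⟨c, rfl⟩ := (hp.pow_dvd_iff_le_factorization hy.ne_zero).mpr hv
  rw [show p ^ (d + 1) * c = p ^ d * (p * c) by ring] at hy ⊢
  refine ⟨p * c, ⟨Nat.pos_of_mul_pos_left hy.1, dvd_mul_right p c, ?_⟩, rfl⟩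
  simpa using ((pow_modEq_one hp.pos).mul_left (p * c)).symm.trans
    (by rw [mul_comm]; exact hy.2.2)

end IsNonunit

lemma isNonunit_pow (hp : 0 < p) (hd : d ≠ 0) : IsNonunit p d (p ^ d) :=
  ⟨by positivity, dvd_pow_self p hd, pow_modEq_one hp⟩

lemma acmMem_iff (hp : 1 < p) (hd : d ≠ 0) {x : ℕ} :
    acmMem (p ^ d) ((p ^ d - 1) * p) x ↔ x = 1 ∨ IsNonunit p d x := by
  refine or_congr Iff.rfl ⟨?_, fun hx => ?_⟩
  · rintro ⟨k, rfl⟩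
    refine ⟨by positivity, (dvd_pow_self p hd).add (Dvd.intro_left _ rfl |>.mul_left k), ?_⟩
    simpa using (pow_modEq_one (by omega)).add
      (Nat.modEq_zero_iff_dvd.mpr (Dvd.intro p rfl) |>.mul_left k)
  · have hmod : p ^ d ≡ x [MOD (p ^ d - 1) * p] :=
      (Nat.modEq_and_modEq_iff_modEq_mul (coprime_self_pow_sub_one (by omega) hd).symm).mp
        ⟨(pow_modEq_one (by omega)).trans hx.2.2.symm,
          (Nat.modEq_zero_iff_dvd.mpr (dvd_pow_self p hd)).trans
            (Nat.modEq_zero_iff_dvd.mpr hx.2.1).symm⟩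
    obtain ⟨k, hk⟩ := (Nat.modEq_iff_dvd' (hx.pow_le hp)).mp hmod
    exact ⟨k, by have := hx.pow_le hp; rw [mul_comm k]; omega⟩

lemma not_acmMem_pow_of_lt (hp : 1 < p) (hd : d ≠ 0) {γ : ℕ} (hγ : γ ≠ 0) (hγd : γ < d) :
    ¬ acmMem (p ^ d) ((p ^ d - 1) * p) (p ^ γ) := by
  rw [acmMem_iff hp hd]
  rintro (h | h)
  · exact (Nat.one_lt_pow hγ hp).ne' h
  · exact (Nat.pow_lt_pow_right hp hγd).not_ge (h.pow_le hp)

lemma acmAtom_iff (hp : 1 < p) (hd : d ≠ 0) {u : ℕ} :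
    acmAtom (p ^ d) ((p ^ d - 1) * p) u ↔
      IsNonunit p d u ∧ ∀ y z, IsNonunit p d y → IsNonunit p d z → u ≠ y * z := by
  simp only [acmAtom, acmMem_iff hp hd]
  constructor
  · rintro ⟨hu | hu, hu1, h⟩
    · exact absurd hu hu1
    refine ⟨hu, fun y z hy hz hyz => ?_⟩
    exact (h y z (.inr hy) (.inr hz) hyz).elim (hy.one_lt hp).ne' (hz.one_lt hp).ne'
  · rintro ⟨hu, h⟩
    refine ⟨.inr hu, (hu.one_lt hp).ne', ?_⟩
    intro y z hy hz hyz
    by_contra! h1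
    exact h y z (hy.resolve_left h1.1) (hz.resolve_left h1.2) hyz

lemma pow_acmAtom (hp : 1 < p) (hd : d ≠ 0) : acmAtom (p ^ d) ((p ^ d - 1) * p) (p ^ d) := by
  refine (acmAtom_iff hp hd).mpr ⟨isNonunit_pow (by omega) hd, fun y z hy hz hyz => ?_⟩
  have hpd : 1 < p ^ d := Nat.one_lt_pow hd hp
  have := Nat.mul_le_mul (hy.pow_le hp) (hpd.trans_le (hz.pow_le hp))
  omega

lemma acmAtom_of_factorization_eq_one (hp : p.Prime) (hd : d ≠ 0) {u : ℕ}
    (hu : IsNonunit p d u) (hv : u.factorization p = 1) :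
    acmAtom (p ^ d) ((p ^ d - 1) * p) u := by
  refine (acmAtom_iff hp.one_lt hd).mpr ⟨hu, fun y z hy hz hyz => ?_⟩
  rw [hyz, Nat.factorization_mul hy.ne_zero hz.ne_zero, Finsupp.add_apply] at hv
  have := hy.one_le_factorization hp
  have := hz.one_le_factorization hp
  omega

lemma factorization_le_of_acmAtom (hp : p.Prime) (hd : d ≠ 0) {u : ℕ}
    (hu : acmAtom (p ^ d) ((p ^ d - 1) * p) u) : u.factorization p ≤ d := by
  obtain ⟨hu, hirr⟩ := (acmAtom_iff hp.one_lt hd).mp hu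
  by_contra! hv
  obtain ⟨ρ, hρ, rfl⟩ := hu.exists_eq_pow_mul hp hv
  exact hirr _ _ (isNonunit_pow hp.pos hd) hρ rfl

lemma exists_acmFactorization (hp : 1 < p) (hd : d ≠ 0) {x : ℕ} (hx : IsNonunit p d x) :
    ∃ s, acmFactorization (p ^ d) ((p ^ d - 1) * p) x s := by
  induction x using Nat.strong_induction_on with
  | _ x ih =>
  by_cases hatom : acmAtom (p ^ d) ((p ^ d - 1) * p) x
  · exact ⟨{x}, by simpa [acmFactorization] using hatom⟩
  obtain ⟨y, z, hy, hz, rfl⟩ : ∃ y z, IsNonunit p d y ∧ IsNonunit p d z ∧ x = y * z := by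
    simpa [acmAtom_iff hp hd, hx] using hatom
  obtain ⟨s, hs⟩ := ih y (lt_mul_of_one_lt_right hy.1 (hz.one_lt hp)) hy
  obtain ⟨t, ht⟩ := ih z (lt_mul_of_one_lt_left hz.1 (hy.one_lt hp)) hz
  refine ⟨s + t, fun u hu => ?_, by rw [Multiset.prod_add, hs.2, ht.2]⟩
  exact (Multiset.mem_add.mp hu).elim (hs.1 u) (ht.1 u)

lemma card_le_factorization (hp : p.Prime) (hd : d ≠ 0) {x : ℕ} {s : Multiset ℕ}
    (hs : acmFactorization (p ^ d) ((p ^ d - 1) * p) x s) :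
    Multiset.card s ≤ x.factorization p := by
  have hns : ∀ u ∈ s, IsNonunit p d u := fun u hu =>
    ((acmAtom_iff hp.one_lt hd).mp (hs.1 u hu)).1
  rw [← hs.2, Nat.factorization_multiset_prod_apply p fun h0 => (hns 0 h0).ne_zero rfl]
  simpa using Multiset.card_nsmul_le_sum (s := s.map (·.factorization p)) (a := 1)
    (by simpa using fun u hu => (hns u hu).one_le_factorization hp)

lemma exists_facDist_cons_pow_le (hp : p.Prime) (hd : d ≠ 0) {x : ℕ} {z : Multiset ℕ}
    (hz : acmFactorization (p ^ d) ((p ^ d - 1) * p) x z) (hx : d < x.factorization p) :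
    ∃ y : Multiset ℕ, (∀ u ∈ y, acmAtom (p ^ d) ((p ^ d - 1) * p) u) ∧ p ^ d * y.prod = x ∧
      facDist z (p ^ d ::ₘ y) ≤ d + 1 := by
  have hns : ∀ u ∈ z, IsNonunit p d u := fun u hu =>
    ((acmAtom_iff hp.one_lt hd).mp (hz.1 u hu)).1
  have hfac : ∀ {s}, s ≤ z → s.prod.factorization p = (s.map (·.factorization p)).sum :=
    fun hs => Nat.factorization_multiset_prod_apply p fun h0 =>
      (hns 0 (Multiset.mem_of_le hs h0)).ne_zero rfl
  obtain ⟨S, hSz, hScard, hSlo, hShi⟩ := exists_le_card_le_sum_map_mem_Ioc d _ z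
    (fun u hu => ⟨(hns u hu).one_le_factorization hp,
      factorization_le_of_acmAtom hp hd (hz.1 u hu)⟩)
    (by rwa [← hfac le_rfl, hz.2])
  have hS : IsNonunit p d S.prod := IsNonunit.multiset_prod (by rintro rfl; simp at hSlo)
    fun u hu => hns u (Multiset.mem_of_le hSz hu)
  obtain ⟨ρ, hρ, hSρ⟩ := hS.exists_eq_pow_mul hp (by rwa [hfac hSz])
  obtain ⟨t, ht⟩ := exists_acmFactorization hp.one_lt hd hρ
  have hρv : ρ.factorization p ≤ d := by
    have := hfac hSz
    rw [hSρ, Nat.factorization_mul (pow_ne_zero d hp.ne_zero) hρ.ne_zero, Finsupp.add_apply,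
      hp.factorization_pow, Finsupp.single_eq_same] at this
    omega
  refine ⟨z - S + t, fun u hu => ?_, ?_, ?_⟩
  · exact (Multiset.mem_add.mp hu).elim
      (fun h => hz.1 u (Multiset.mem_of_le tsub_le_self h)) (ht.1 u)
  · rw [Multiset.prod_add, ht.2, mul_left_comm, ← hSρ, ← Multiset.prod_add,
      tsub_add_cancel_of_le hSz, hz.2]
  · calc facDist z (p ^ d ::ₘ (z - S + t))
        = facDist (z - S + S) (z - S + p ^ d ::ₘ t) := by
          rw [tsub_add_cancel_of_le hSz, Multiset.add_cons]
      _ = facDist S (p ^ d ::ₘ t) := facDist_add_left _ _ _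
      _ ≤ max (Multiset.card S) (Multiset.card (p ^ d ::ₘ t)) := facDist_le_max_card _ _
      _ ≤ d + 1 := max_le hScard (by simpa using (card_le_factorization hp hd ht).trans hρv)

lemma acmNChain_of_acmFactorization (hp : p.Prime) (hd : d ≠ 0) {x : ℕ} {z₁ z₂ : Multiset ℕ}
    (h₁ : acmFactorization (p ^ d) ((p ^ d - 1) * p) x z₁)
    (h₂ : acmFactorization (p ^ d) ((p ^ d - 1) * p) x z₂) :
    acmNChain (p ^ d) ((p ^ d - 1) * p) x (d + 1) z₁ z₂ := by
  induction x using Nat.strong_induction_on generalizing z₁ z₂ with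
  | _ x ih =>
  by_cases hx : x.factorization p ≤ d + 1
  · refine .of_facDist_le h₁ h₂ ((facDist_le_max_card _ _).trans (max_le ?_ ?_))
    · exact (card_le_factorization hp hd h₁).trans hx
    · exact (card_le_factorization hp hd h₂).trans hx
  have hatom := pow_acmAtom hp.one_lt hd
  have hcons : ∀ {y}, (∀ u ∈ y, acmAtom (p ^ d) ((p ^ d - 1) * p) u) → p ^ d * y.prod = x →
      acmFactorization (p ^ d) ((p ^ d - 1) * p) x (p ^ d ::ₘ y) := fun hy hyx =>
    ⟨by simpa only [Multiset.mem_cons, forall_eq_or_imp] using ⟨hatom, hy⟩,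
      by rw [Multiset.prod_cons, hyx]⟩
  obtain ⟨y₁, hy₁, hx₁, hz₁⟩ := exists_facDist_cons_pow_le hp hd h₁ (by omega)
  obtain ⟨y₂, hy₂, hx₂, hz₂⟩ := exists_facDist_cons_pow_le hp hd h₂ (by omega)
  have hpd : 1 < p ^ d := Nat.one_lt_pow hd hp.one_lt
  have hprod : y₂.prod = y₁.prod :=
    Nat.eq_of_mul_eq_mul_left (by omega) (hx₂.trans hx₁.symm)
  have hlt : y₁.prod < x := by
    rw [← hx₁] at hx ⊢
    exact lt_mul_of_one_lt_left (Nat.pos_of_ne_zero fun h => by simp [h] at hx) hpd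
  have hmid := (ih _ hlt ⟨hy₁, rfl⟩ ⟨hy₂, hprod⟩).cons hatom
  rw [hx₁] at hmid
  exact ((acmNChain.of_facDist_le h₁ (hcons hy₁ hx₁) hz₁).trans hmid).trans
    (acmNChain.of_facDist_le h₂ (hcons hy₂ hx₂) hz₂).symm

lemma succ_mem_acmCatSet (hp : p.Prime) (hd : d ≠ 0) :
    d + 1 ∈ acmCatSet (p ^ d) ((p ^ d - 1) * p) :=
  fun _ _ _ _ h₁ h₂ => acmNChain_of_acmFactorization hp hd h₁ h₂

lemma eq_or_of_dvd_add_sub_one_mul {i j : ℕ} (hi : 0 < i) (hid : i ≤ d) (hj : j ≤ d + 1)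
    (h : d ∣ i + (d - 1) * j) : i = j ∨ (i = d ∧ j = 0) ∨ (i = 1 ∧ j = d + 1) := by
  obtain ⟨k, hk⟩ : (d : ℤ) ∣ i - j := by
    have : ((i + (d - 1) * j : ℕ) : ℤ) - d * j = i - j := by
      rw [Nat.cast_add, Nat.cast_mul, Nat.cast_sub (by omega)]; ring
    exact this ▸ (Int.natCast_dvd_natCast.mpr h).sub (dvd_mul_right _ _)
  have hk₁ : -1 ≤ k := by nlinarith
  have hk₂ : k ≤ 1 := by nlinarith
  interval_cases k <;> omega

lemma exists_prime_modEq (hp : p.Prime) (hd : d ≠ 0) :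
    ∃ q, q.Prime ∧ p ≠ q ∧ q ≡ p ^ (d - 1) [MOD p ^ d - 1] := by
  obtain ⟨q, hpq, hq, hqm⟩ := Nat.forall_exists_prime_gt_and_modEq p
    (Nat.sub_ne_zero_of_lt (Nat.one_lt_pow hd hp.one_lt))
    ((coprime_self_pow_sub_one hp.pos hd).pow_left (d - 1))
  exact ⟨q, hq, hpq.ne, hqm⟩

lemma factorization_pow_mul_pow_left (hp : p.Prime) (hq : q.Prime) (hpq : p ≠ q) (i j : ℕ) :
    (p ^ i * q ^ j).factorization p = i := by
  simp [Nat.factorization_mul, hp.ne_zero, hq.ne_zero, hp.factorization_self,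
    hq.factorization, hpq.symm]

lemma factorization_pow_mul_pow_right (hp : p.Prime) (hq : q.Prime) (hpq : p ≠ q) (i j : ℕ) :
    (p ^ i * q ^ j).factorization q = j := by
  simp [Nat.factorization_mul, hp.ne_zero, hq.ne_zero, hq.factorization_self,
    hp.factorization, hpq]

lemma pow_ne_mul_pow (hp : p.Prime) (hq : q.Prime) (hpq : p ≠ q) (hd : d ≠ 0) :
    p ^ d ≠ p * q ∧ p ^ d ≠ p * q ^ (d + 1) ∧ p * q ≠ p * q ^ (d + 1) := by
  have hvq : ∀ {u v : ℕ}, u.factorization q ≠ v.factorization q → u ≠ v :=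
    fun h huv => h (huv ▸ rfl)
  refine ⟨hvq ?_, hvq ?_, hvq ?_⟩ <;>
    simp [Nat.factorization_mul, hp.ne_zero, hq.ne_zero, hp.factorization, hq.factorization,
      hpq, hd]

lemma isNonunit_pow_mul_pow_iff (hp : p.Prime) (hq : q.Prime) (hpq : p ≠ q)
    (hqm : q ≡ p ^ (d - 1) [MOD p ^ d - 1]) {i j : ℕ} :
    IsNonunit p d (p ^ i * q ^ j) ↔ 0 < i ∧ d ∣ i + (d - 1) * j := by
  have hcong : p ^ i * q ^ j ≡ p ^ (i + (d - 1) * j) [MOD p ^ d - 1] := by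
    rw [pow_add, pow_mul]; exact (hqm.pow j).mul_left _
  have hpos : 0 < p ^ i * q ^ j := by have := hp.pos; have := hq.pos; positivity
  rw [IsNonunit, hp.dvd_iff_one_le_factorization hpos.ne',
    factorization_pow_mul_pow_left hp hq hpq, ← pow_modEq_one_iff_dvd hp.one_lt]
  exact ⟨fun h => ⟨h.2.1, hcong.symm.trans h.2.2⟩, fun h => ⟨hpos, h.1, hcong.trans h.2⟩⟩

lemma mul_pow_acmAtom (hp : p.Prime) (hq : q.Prime) (hpq : p ≠ q) (hd : d ≠ 0)
    (hqm : q ≡ p ^ (d - 1) [MOD p ^ d - 1]) {j : ℕ} (hj : d ∣ 1 + (d - 1) * j) :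
    acmAtom (p ^ d) ((p ^ d - 1) * p) (p * q ^ j) := by
  simpa using acmAtom_of_factorization_eq_one hp hd
    ((isNonunit_pow_mul_pow_iff hp hq hpq hqm).mpr ⟨one_pos, hj⟩)
    (factorization_pow_mul_pow_left hp hq hpq 1 j)

lemma acmAtom_dvd_pow_mul_pow (hp : p.Prime) (hq : q.Prime) (hpq : p ≠ q) (hd : d ≠ 0)
    (hqm : q ≡ p ^ (d - 1) [MOD p ^ d - 1]) {u : ℕ} (hu : acmAtom (p ^ d) ((p ^ d - 1) * p) u)
    (hdvd : u ∣ p ^ (d + 1) * q ^ (d + 1)) : u = p ^ d ∨ u = p * q ∨ u = p * q ^ (d + 1) := by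
  obtain ⟨_, _, hpi, hqj, rfl⟩ := Nat.dvd_mul.mp hdvd
  obtain ⟨i, hi, rfl⟩ := (Nat.dvd_prime_pow hp).mp hpi
  obtain ⟨j, hj, rfl⟩ := (Nat.dvd_prime_pow hq).mp hqj
  have hid := factorization_le_of_acmAtom hp hd hu
  rw [factorization_pow_mul_pow_left hp hq hpq] at hid
  have hns : ∀ {i j}, 0 < i → d ∣ i + (d - 1) * j → IsNonunit p d (p ^ i * q ^ j) :=
    fun hi hij => (isNonunit_pow_mul_pow_iff hp hq hpq hqm).mpr ⟨hi, hij⟩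
  obtain ⟨hu, hirr⟩ := (acmAtom_iff hp.one_lt hd).mp hu
  obtain ⟨hi0, hij⟩ := (isNonunit_pow_mul_pow_iff hp hq hpq hqm).mp hu
  rcases eq_or_of_dvd_add_sub_one_mul hi0 hid hj hij with rfl | ⟨rfl, rfl⟩ | ⟨rfl, rfl⟩
  · rcases Nat.lt_or_ge i 2 with h | h
    · obtain rfl : i = 1 := by omega
      simp
    · obtain ⟨k, rfl⟩ := Nat.exists_eq_add_of_le' h
      refine absurd ?_ (hirr (p ^ 1 * q ^ 1) (p ^ (k + 1) * q ^ (k + 1)) ?_ ?_)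
      · ring
      · exact hns one_pos ⟨1, by omega⟩
      · exact hns k.succ_pos ⟨k + 1, by cases d <;> simp_all; ring⟩
  · simp
  · simp

lemma acmFactorization_pow_mul_pow (hp : p.Prime) (hq : q.Prime) (hpq : p ≠ q) (hd : d ≠ 0)
    (hqm : q ≡ p ^ (d - 1) [MOD p ^ d - 1]) {s : Multiset ℕ}
    (hs : acmFactorization (p ^ d) ((p ^ d - 1) * p) (p ^ (d + 1) * q ^ (d + 1)) s) :
    s = Multiset.replicate (d + 1) (p * q) ∨ s = {p ^ d, p * q ^ (d + 1)} := by
  obtain ⟨hAB, hAC, hBC⟩ := pow_ne_mul_pow hp hq hpq hd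
  have hs' := Multiset.eq_replicate_add_replicate_add_replicate hAB hAC hBC fun u hu =>
    acmAtom_dvd_pow_mul_pow hp hq hpq hd hqm (hs.1 u hu) (hs.2 ▸ Multiset.dvd_prod hu)
  generalize s.count (p ^ d) = γ, s.count (p * q) = α, s.count (p * q ^ (d + 1)) = β at hs'
  have hprod : p ^ (d * γ + α + β) * q ^ (α + (d + 1) * β) = p ^ (d + 1) * q ^ (d + 1) := by
    rw [← hs.2, hs']
    simp only [Multiset.prod_add, Multiset.prod_replicate]
    ring
  have hvp := congrArg (·.factorization p) hprod
  have hvq := congrArg (·.factorization q) hprod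
  simp only [factorization_pow_mul_pow_left hp hq hpq,
    factorization_pow_mul_pow_right hp hq hpq] at hvp hvq
  have hβ : β ≤ 1 := by nlinarith
  rw [hs']
  interval_cases β
  · obtain rfl : γ = 0 := (Nat.mul_eq_zero.mp (by omega : d * γ = 0)).resolve_left hd
    simp [show α = d + 1 by omega]
  · obtain rfl : γ = 1 :=
      Nat.eq_of_mul_eq_mul_left (Nat.pos_of_ne_zero hd) (by omega : d * γ = d * 1)
    simp [show α = 0 by omega]

lemma succ_le_of_mem_acmCatSet (hp : p.Prime) (hd : d ≠ 0) {N : ℕ}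
    (hN : N ∈ acmCatSet (p ^ d) ((p ^ d - 1) * p)) : d + 1 ≤ N := by
  obtain ⟨q, hq, hpq, hqm⟩ := exists_prime_modEq hp hd
  obtain ⟨hAB, -, hBC⟩ := pow_ne_mul_pow hp hq hpq hd
  set z := Multiset.replicate (d + 1) (p * q)
  set z' : Multiset ℕ := {p ^ d, p * q ^ (d + 1)}
  have hz : acmFactorization (p ^ d) ((p ^ d - 1) * p) (p ^ (d + 1) * q ^ (d + 1)) z :=
    ⟨fun u hu => Multiset.eq_of_mem_replicate hu ▸ by
      simpa using mul_pow_acmAtom hp hq hpq hd hqm (j := 1) ⟨1, by omega⟩,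
      by simp only [z, Multiset.prod_replicate, mul_pow]⟩
  have hz' : acmFactorization (p ^ d) ((p ^ d - 1) * p) (p ^ (d + 1) * q ^ (d + 1)) z' :=
    ⟨by simp [z', pow_acmAtom hp.one_lt hd,
      mul_pow_acmAtom hp hq hpq hd hqm (j := d + 1) ⟨d, by cases d <;> simp_all; ring⟩],
      by simp [z']; ring⟩
  have hdist : d + 1 ≤ facDist z z' :=
    calc d + 1 = (z - z').count (p * q) := by simp [z, z', hAB.symm, hBC]
      _ ≤ Multiset.card (z - z') := Multiset.count_le_card _ _
      _ ≤ facDist z z' := le_max_left _ _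
  have hne : z ≠ z' := fun h => by rw [h, facDist_self] at hdist; omega
  have hx : acmMem (p ^ d) ((p ^ d - 1) * p) (p ^ (d + 1) * q ^ (d + 1)) :=
    (acmMem_iff hp.one_lt hd).mpr <| .inr <| (isNonunit_pow_mul_pow_iff hp hq hpq hqm).mpr
      ⟨d.succ_pos, d + 1, by cases d <;> simp_all; ring⟩
  exact hdist.trans (facDist_le_of_acmNChain hne
    (fun w hw => acmFactorization_pow_mul_pow hp hq hpq hd hqm hw) (hN _ hx _ _ hz hz'))

end ACM

/-- For every `n ≥ 2` and prime `p`, the local singular ACM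
`M = M_{p^{n-1}, (p^{n-1}-1)p}` has `α = 1` (i.e. `gcd = p`), `β = n - 1`, and
catenary degree exactly `n`. -/
theorem catenary_degree_realizes_all_values (n p : ℕ) (hn : 2 ≤ n) (hp : p.Prime) :
    Nat.gcd (p ^ (n - 1)) ((p ^ (n - 1) - 1) * p) = p ^ 1 ∧
    acmMem (p ^ (n - 1)) ((p ^ (n - 1) - 1) * p) (p ^ (n - 1)) ∧
    (∀ γ : ℕ, 0 < γ → γ < n - 1 →
      ¬ acmMem (p ^ (n - 1)) ((p ^ (n - 1) - 1) * p) (p ^ γ)) ∧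
    IsLeast (acmCatSet (p ^ (n - 1)) ((p ^ (n - 1) - 1) * p)) n := by
  obtain ⟨d, rfl⟩ : ∃ d, n = d + 1 := ⟨n - 1, by omega⟩
  have hd : d ≠ 0 := by omega
  rw [Nat.add_sub_cancel, pow_one]
  exact ⟨ACM.gcd_pow_sub_one_mul hp.pos hd, .inr ⟨0, by simp⟩,
    fun _ hγ hγd => ACM.not_acmMem_pow_of_lt hp.one_lt hd hγ.ne' hγd,
    ACM.succ_mem_acmCatSet hp hd, fun _ hN => ACM.succ_le_of_mem_acmCatSet hp hd hN⟩
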